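/- Let A and B be n × n Hermitian complex matrices with −B ≤ A ≤ B in the Loewner order. Then ‖A‖₁ ≤ Tr B. -/

import Mathlib

open Matrix Filter
open scoped ComplexOrder

noncomputable section

/-- The square root of a positive semidefinite matrix (the former `Matrix.PosSemidef.sqrt`). -/
def posSemidefSqrt {m : Type*} [Fintype m] [DecidableEq m] {A : Matrix m m ℂ}
    (hA : A.PosSemidef) : Matrix m m ℂ :=
  (hA.1.eigenvectorUnitary : Matrix m m ℂ) *
    diagonal ((↑) ∘ (Real.sqrt ∘ hA.1.eigenvalues)) *
    (star (hA.1.eigenvectorUnitary : Matrix m m ℂ))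

/-- The trace norm `‖A‖₁ = Tr √(AᴴA)` of a complex square matrix. -/
def traceNorm {m : Type*} [Fintype m] [DecidableEq m] (A : Matrix m m ℂ) : ℝ :=
  (posSemidefSqrt (Matrix.posSemidef_conjTranspose_mul_self A)).trace.re

/-- Spectral radius of a map on a complex vector space:
the supremum of the moduli of its eigenvalues. -/
def specRad {M : Type*} [Zero M] [SMul ℂ M] (T : M → M) : ℝ :=
  sSup {r : ℝ | ∃ (c : ℂ) (v : M), v ≠ 0 ∧ T v = c • v ∧ r = ‖c‖}

/-- A linear map on square matrices is positive if it maps positive semidefinite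
matrices to positive semidefinite matrices. -/
def IsPosMap {m : Type*} [Fintype m] (T : Matrix m m ℂ →ₗ[ℂ] Matrix m m ℂ) : Prop :=
  ∀ A : Matrix m m ℂ, A.PosSemidef → (T A).PosSemidef

/-- `sup(x/y) = inf {λ ≥ 0 : x ≤ λ y}` (in `[0,∞]`, with the Loewner order). -/
def supRatio {m : Type*} [Fintype m] (x y : Matrix m m ℂ) : ENNReal :=
  sInf {r : ENNReal | ∃ c : ℝ, 0 ≤ c ∧ r = ENNReal.ofReal c ∧ (c • y - x).PosSemidef}

/-- `inf(x/y) = sup {λ ≥ 0 : λ y ≤ x}` (in `[0,∞]`, with the Loewner order). -/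
def infRatio {m : Type*} [Fintype m] (x y : Matrix m m ℂ) : ENNReal :=
  sSup {r : ENNReal | ∃ c : ℝ, 0 ≤ c ∧ r = ENNReal.ofReal c ∧ (x - c • y).PosSemidef}

/-- The Hilbert projective metric `d_H(x,y) = log (sup(x/y) / inf(x/y)) ∈ [0,∞]`. -/
def dH {m : Type*} [Fintype m] (x y : Matrix m m ℂ) : EReal :=
  ENNReal.log (supRatio x y / infRatio x y)

/-- The projective diameter `Δ(T) = sup { d_H(T x, T y) : x, y PSD nonzero }`. -/
def DeltaT {m : Type*} [Fintype m] (T : Matrix m m ℂ →ₗ[ℂ] Matrix m m ℂ) : EReal :=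
  sSup {e : EReal | ∃ x y : Matrix m m ℂ,
    x.PosSemidef ∧ x ≠ 0 ∧ y.PosSemidef ∧ y ≠ 0 ∧ e = dH (T x) (T y)}

end

/-! Diagonalize `A = U diag(λ) U*`. Then `√(AᴴA) = |A| = U diag |λ| U*`, so `‖A‖₁ = ∑ |λᵢ|`.
Conjugating `-B ≤ A ≤ B` by `U` and reading off diagonal entries gives `|λᵢ| ≤ (U* B U)ᵢᵢ`,
and these diagonal entries sum to `Tr B`. -/

open scoped MatrixOrder

namespace Matrix

variable {n : Type*} [Fintype n] [DecidableEq n]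

theorem PosSemidef.posSemidefSqrt_eq_sqrt {A : Matrix n n ℂ} (hA : A.PosSemidef) :
    posSemidefSqrt hA = CFC.sqrt A := by
  rw [CFC.sqrt_eq_real_sqrt A hA.nonneg, cfcₙ_eq_cfc, hA.1.cfc_eq, IsHermitian.cfc,
    Unitary.conjStarAlgAut_apply]
  rfl

theorem traceNorm_eq_re_trace_abs (A : Matrix n n ℂ) : traceNorm A = (CFC.abs A).trace.re := by
  rw [traceNorm, PosSemidef.posSemidefSqrt_eq_sqrt]
  rfl

namespace IsHermitian

variable {𝕜 : Type*} [RCLike 𝕜]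

theorem trace_cfc {A : Matrix n n 𝕜} (hA : A.IsHermitian) (f : ℝ → ℝ) :
    (cfc f A).trace = ∑ i, (f (hA.eigenvalues i) : 𝕜) := by
  rw [hA.cfc_eq, IsHermitian.cfc, Unitary.conjStarAlgAut_apply, trace_mul_cycle,
    Unitary.coe_star_mul_self, one_mul, trace_diagonal]
  rfl

theorem traceNorm_eq_sum_abs_eigenvalues {A : Matrix n n ℂ} (hA : A.IsHermitian) :
    traceNorm A = ∑ i, |hA.eigenvalues i| := by
  rw [traceNorm_eq_re_trace_abs, CFC.abs_eq_cfc_norm A hA.isSelfAdjoint, hA.trace_cfc]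
  simp

theorem star_eigenvectorUnitary_mul_mul {A : Matrix n n 𝕜} (hA : A.IsHermitian) :
    star (hA.eigenvectorUnitary : Matrix n n 𝕜) * A * (hA.eigenvectorUnitary : Matrix n n 𝕜) =
      diagonal (RCLike.ofReal ∘ hA.eigenvalues) := by
  simpa [Unitary.conjStarAlgAut_star_apply, mul_assoc] using
    hA.conjStarAlgAut_star_eigenvectorUnitary

theorem abs_eigenvalues_le_re_diag {A B : Matrix n n 𝕜} (hA : A.IsHermitian) (hBA : -B ≤ A)
    (hAB : A ≤ B) (i : n) :
    |hA.eigenvalues i| ≤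
      RCLike.re ((star (hA.eigenvectorUnitary : Matrix n n 𝕜) * B *
        (hA.eigenvectorUnitary : Matrix n n 𝕜)) i i) := by
  set U : Matrix n n 𝕜 := (hA.eigenvectorUnitary : Matrix n n 𝕜)
  have hupper := ((le_iff.1 hAB).conjTranspose_mul_mul_same U).diag_nonneg (i := i)
  have hlower := ((le_iff.1 hBA).conjTranspose_mul_mul_same U).diag_nonneg (i := i)
  rw [← star_eq_conjTranspose, mul_sub, sub_mul, hA.star_eigenvectorUnitary_mul_mul] at hupper
  rw [← star_eq_conjTranspose, sub_neg_eq_add, mul_add, add_mul,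
    hA.star_eigenvectorUnitary_mul_mul] at hlower
  replace hupper := (RCLike.nonneg_iff.1 hupper).1
  replace hlower := (RCLike.nonneg_iff.1 hlower).1
  simp only [sub_apply, add_apply, diagonal_apply_eq, Function.comp_apply, map_sub, map_add,
    RCLike.ofReal_re] at hupper hlower
  exact abs_le.2 ⟨by linarith, by linarith⟩

theorem sum_abs_eigenvalues_le_re_trace {A B : Matrix n n 𝕜} (hA : A.IsHermitian)
    (hBA : -B ≤ A) (hAB : A ≤ B) :
    ∑ i, |hA.eigenvalues i| ≤ RCLike.re B.trace := by
  have htrace : (star (hA.eigenvectorUnitary : Matrix n n 𝕜) * B *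
      (hA.eigenvectorUnitary : Matrix n n 𝕜)).trace = B.trace := by
    rw [trace_mul_cycle, Unitary.mul_star_self_of_mem hA.eigenvectorUnitary.2, one_mul]
  rw [← htrace, trace, map_sum]
  exact Finset.sum_le_sum fun i _ ↦ hA.abs_eigenvalues_le_re_diag hBA hAB i

end IsHermitian

end Matrix

theorem stmt13_general (n : ℕ) (A B : Matrix (Fin n) (Fin n) ℂ)
    (hA : A.IsHermitian)
    (h1 : (A - (-B)).PosSemidef) (h2 : (B - A).PosSemidef) :
    traceNorm A ≤ B.trace.re := by
  rw [hA.traceNorm_eq_sum_abs_eigenvalues]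
  exact hA.sum_abs_eigenvalues_le_re_trace h1 h2

/-- If `A`, `B` are Hermitian with `-B ≤ A ≤ B` in the Loewner order,
then `‖A‖₁ ≤ Tr B`. -/
theorem stmt13 (n : ℕ) (A B : Matrix (Fin n) (Fin n) ℂ)
    (hA : A.IsHermitian) (hB : B.IsHermitian)
    (h1 : (A - (-B)).PosSemidef) (h2 : (B - A).PosSemidef) :
    traceNorm A ≤ B.trace.re :=
  stmt13_general n A B hA h1 h2
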